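/- Let L, H > 0 with πH/L ≥ t₀, where t₀ is the positive root of t = 3 tanh t. Then the series Σ_{k=1}^∞ [ (2k-1)³/sinh(πH(2k-1)/L) - (2k)³/sinh(πH·2k/L) ] converges and is strictly positive. -/

import Mathlib

open Real

lemma my_tanh_lt_one (x : ℝ) : Real.tanh x < 1 := by
  rw [Real.tanh_eq_sinh_div_cosh, div_lt_one (Real.cosh_pos _)]
  rw [Real.sinh_eq, Real.cosh_eq]
  have := Real.exp_pos (-x)
  linarith

lemma my_continuous_tanh : Continuous Real.tanh := by
  have : Real.tanh = fun x => Real.sinh x / Real.cosh x := by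
    funext x; exact Real.tanh_eq_sinh_div_cosh x
  rw [this]
  exact Real.continuous_sinh.div Real.continuous_cosh fun x => (Real.cosh_pos x).ne'

lemma key_ineq (t₀ : ℝ) (ht₀ : 0 < t₀)
    (ht₀uniq : ∀ s : ℝ, 0 < s → s = 3 * Real.tanh s → s = t₀) :
    ∀ s : ℝ, t₀ < s → 3 * Real.tanh s < s := by
  intro s hs
  by_contra hcon
  push_neg at hcon
  rcases eq_or_lt_of_le hcon with heq | hlt
  · have := ht₀uniq s (ht₀.trans hs) heq
    linarith
  · have hs3 : s < 3 := by
      have := my_tanh_lt_one s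
      nlinarith
    have hcont : ContinuousOn (fun x => x - 3 * Real.tanh x) (Set.Icc s 3) :=
      (continuous_id.sub (continuous_const.mul my_continuous_tanh)).continuousOn
    have h3 : (0:ℝ) < 3 - 3 * Real.tanh 3 := by
      have := my_tanh_lt_one 3; linarith
    have hivt := intermediate_value_Icc hs3.le hcont
    have h0 : (0:ℝ) ∈ Set.Icc (s - 3 * Real.tanh s) (3 - 3 * Real.tanh 3) :=
      ⟨by linarith, by linarith⟩
    obtain ⟨x, hx, hx0⟩ := hivt h0
    have hx' : x = 3 * Real.tanh x := by
      have : x - 3 * Real.tanh x = 0 := hx0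
      linarith
    have hxt : x = t₀ := ht₀uniq x (lt_of_lt_of_le (ht₀.trans hs) hx.1) hx'
    have : t₀ < x := lt_of_lt_of_le hs hx.1
    rw [hxt] at this
    exact lt_irrefl _ this

lemma f_strictAnti (c t₀ : ℝ) (ht₀ : 0 < t₀) (hc : t₀ ≤ c)
    (hkey : ∀ s : ℝ, t₀ < s → 3 * Real.tanh s < s) :
    StrictAntiOn (fun t : ℝ => t ^ 3 / Real.sinh (c * t)) (Set.Ici 1) := by
  have hc0 : 0 < c := lt_of_lt_of_le ht₀ hc
  apply strictAntiOn_of_deriv_neg (convex_Ici 1)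
  · apply ContinuousOn.div
    · exact (continuous_pow 3).continuousOn
    · exact (Real.continuous_sinh.comp (continuous_const.mul continuous_id)).continuousOn
    · intro t ht
      have h1t : (1:ℝ) ≤ t := ht
      have : 0 < c * t := mul_pos hc0 (by linarith)
      exact ne_of_gt (Real.sinh_pos_iff.mpr this)
  · intro t ht
    rw [interior_Ici] at ht
    have ht1 : (1:ℝ) < t := ht
    have hct : 0 < c * t := mul_pos hc0 (by linarith)
    have hsinh : 0 < Real.sinh (c * t) := Real.sinh_pos_iff.mpr hct
    have h1 : HasDerivAt (fun t : ℝ => t ^ 3) (3 * t ^ 2) t := by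
      simpa using hasDerivAt_pow 3 t
    have h2 : HasDerivAt (fun t : ℝ => Real.sinh (c * t)) (Real.cosh (c * t) * c) t := by
      have := (Real.hasDerivAt_sinh (c * t)).comp t ((hasDerivAt_id t).const_mul c)
      simpa [Function.comp_def] using this
    have hd := h1.div h2 (ne_of_gt hsinh)
    rw [show (fun t : ℝ => t ^ 3 / Real.sinh (c * t)) = ((fun t : ℝ => t ^ 3) / fun t => Real.sinh (c * t)) from rfl, hd.deriv]
    apply div_neg_of_neg_of_pos _ (by positivity)
    have hs : t₀ < c * t := by nlinarith
    have htanh := hkey (c * t) hs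
    rw [Real.tanh_eq_sinh_div_cosh] at htanh
    have hcosh : 0 < Real.cosh (c * t) := Real.cosh_pos _
    have hnum : 3 * Real.sinh (c * t) < c * t * Real.cosh (c * t) := by
      have h' := mul_lt_mul_of_pos_right htanh hcosh
      rw [mul_assoc, div_mul_cancel₀ _ (ne_of_gt hcosh)] at h'
      linarith
    nlinarith [mul_lt_mul_of_pos_left hnum (show (0:ℝ) < t^2 by positivity)]

/-- For a rectangle `(0,L) × (0,H)` with `πH/L ≥ t₀`, where `t₀` is the positive root
of `t = 3 tanh t`, the alternating series
`Σₖ [(2k-1)³/sinh(πH(2k-1)/L) - (2k)³/sinh(πH·2k/L)]` converges and is positive. -/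
theorem rectangle_series_positive
    (L H t₀ : ℝ) (hL : 0 < L) (hH : 0 < H)
    (ht₀ : 0 < t₀) (ht₀eq : t₀ = 3 * Real.tanh t₀)
    (ht₀uniq : ∀ s : ℝ, 0 < s → s = 3 * Real.tanh s → s = t₀)
    (hratio : t₀ ≤ Real.pi * H / L) :
    Summable (fun k : ℕ =>
      ((2 * (k : ℝ) + 1) ^ 3 / Real.sinh (Real.pi * H * (2 * (k : ℝ) + 1) / L)
        - (2 * (k : ℝ) + 2) ^ 3 / Real.sinh (Real.pi * H * (2 * (k : ℝ) + 2) / L))) ∧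
    0 < ∑' k : ℕ,
      ((2 * (k : ℝ) + 1) ^ 3 / Real.sinh (Real.pi * H * (2 * (k : ℝ) + 1) / L)
        - (2 * (k : ℝ) + 2) ^ 3 / Real.sinh (Real.pi * H * (2 * (k : ℝ) + 2) / L)) := by
  set c := Real.pi * H / L with hcdef
  have hc0 : 0 < c := lt_of_lt_of_le ht₀ hratio
  have hkey := key_ineq t₀ ht₀ ht₀uniq
  have hanti := f_strictAnti c t₀ ht₀ hratio hkey
  set f : ℝ → ℝ := fun t => t ^ 3 / Real.sinh (c * t) with hf
  have harg : ∀ x : ℝ, Real.pi * H * x / L = c * x := by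
    intro x; rw [hcdef]; ring
  have hfun : (fun k : ℕ =>
      ((2 * (k : ℝ) + 1) ^ 3 / Real.sinh (Real.pi * H * (2 * (k : ℝ) + 1) / L)
        - (2 * (k : ℝ) + 2) ^ 3 / Real.sinh (Real.pi * H * (2 * (k : ℝ) + 2) / L)))
      = fun k : ℕ => f (2 * (k : ℝ) + 1) - f (2 * (k : ℝ) + 2) := by
    funext k
    rw [harg, harg, hf]
  -- positivity of terms
  have hpos : ∀ k : ℕ, 0 < f (2 * (k : ℝ) + 1) - f (2 * (k : ℝ) + 2) := by
    intro k
    have hk : (0:ℝ) ≤ (k:ℝ) := Nat.cast_nonneg k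
    have h1 : (2 * (k : ℝ) + 1) ∈ Set.Ici (1:ℝ) := by
      simp only [Set.mem_Ici]; linarith
    have h2 : (2 * (k : ℝ) + 2) ∈ Set.Ici (1:ℝ) := by
      simp only [Set.mem_Ici]; linarith
    have := hanti h1 h2 (by linarith)
    simpa [sub_pos] using this
  -- summability
  set r := Real.exp (-c) with hrdef
  have hr0 : 0 < r := Real.exp_pos _
  have hr1 : r < 1 := Real.exp_lt_one_iff.mpr (by linarith)
  have hr2 : 0 < 1 - r ^ 2 := by nlinarith
  set C := 2 / (1 - r ^ 2) with hCdef
  have hC0 : 0 < C := by positivity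
  have hg : Summable (fun n : ℕ => (n : ℝ) ^ 3 * r ^ n) := by
    have := summable_pow_mul_geometric_of_norm_lt_one (R := ℝ) 3
      (r := r) (by rw [Real.norm_eq_abs, abs_of_pos hr0]; exact hr1)
    simpa using this
  have hbound : ∀ t : ℝ, 1 ≤ t → f t ≤ C * (t ^ 3 * Real.exp (-(c * t))) := by
    intro t ht
    have hct : 0 < c * t := mul_pos hc0 (by linarith)
    have hsinh : 0 < Real.sinh (c * t) := Real.sinh_pos_iff.mpr hct
    have hle : Real.exp (-(2 * (c * t))) ≤ r ^ 2 := by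
      rw [hrdef, ← Real.exp_nat_mul]
      apply Real.exp_le_exp.mpr
      push_cast
      nlinarith
    have hlow : Real.exp (c * t) * (1 - r ^ 2) / 2 ≤ Real.sinh (c * t) := by
      rw [Real.sinh_eq]
      have hexp : Real.exp (-(c * t)) = Real.exp (c * t) * Real.exp (-(2 * (c * t))) := by
        rw [← Real.exp_add]; ring_nf
      have hep : 0 < Real.exp (c * t) := Real.exp_pos _
      rw [hexp]
      have := mul_le_mul_of_nonneg_left hle hep.le
      linarith
    have hlow0 : 0 < Real.exp (c * t) * (1 - r ^ 2) / 2 := by positivity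
    have hdiv : f t ≤ t ^ 3 / (Real.exp (c * t) * (1 - r ^ 2) / 2) := by
      rw [hf]
      exact div_le_div_of_nonneg_left (by positivity) hlow0 hlow
    have heq : t ^ 3 / (Real.exp (c * t) * (1 - r ^ 2) / 2)
        = C * (t ^ 3 * Real.exp (-(c * t))) := by
      rw [hCdef, Real.exp_neg]
      have hep : Real.exp (c * t) ≠ 0 := (Real.exp_pos _).ne'
      field_simp
    rw [heq] at hdiv
    exact hdiv
  have hfpos : ∀ t : ℝ, 1 ≤ t → 0 < f t := by
    intro t ht
    have hct : 0 < c * t := mul_pos hc0 (by linarith)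
    have hsinh : 0 < Real.sinh (c * t) := Real.sinh_pos_iff.mpr hct
    rw [hf]
    positivity
  have hsumf : ∀ (a b : ℕ), 1 ≤ a →
      Summable (fun k : ℕ => f (((a * k + b + 1 : ℕ) : ℝ))) := by
    intro a b ha
    have hi : Function.Injective (fun k : ℕ => a * k + b + 1) := by
      intro x y h
      simp only at h
      have h' : a * x = a * y := by
        have := Nat.add_right_cancel h
        exact Nat.add_right_cancel this
      exact Nat.eq_of_mul_eq_mul_left ha h'
    have hb : Summable (fun k : ℕ => C * (((a * k + b + 1 : ℕ) : ℝ) ^ 3 * r ^ (a * k + b + 1))) :=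
      (hg.comp_injective hi).mul_left C
    apply Summable.of_nonneg_of_le (fun k => (hfpos _ (Nat.one_le_cast.mpr (by omega))).le) _ hb
    intro k
    have h1 : (1 : ℝ) ≤ ((a * k + b + 1 : ℕ) : ℝ) := Nat.one_le_cast.mpr (by omega)
    have := hbound _ h1
    have hrn : Real.exp (-(c * ((a * k + b + 1 : ℕ) : ℝ))) = r ^ (a * k + b + 1) := by
      rw [hrdef, ← Real.exp_nat_mul]
      congr 1
      ring
    rw [hrn] at this
    exact this
  have hs1 : Summable (fun k : ℕ => f (2 * (k : ℝ) + 1)) := by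
    have := hsumf 2 0 (by norm_num)
    convert this using 2 with k
    push_cast
    ring
  have hs2 : Summable (fun k : ℕ => f (2 * (k : ℝ) + 2)) := by
    have := hsumf 2 1 (by norm_num)
    convert this using 2 with k
    push_cast
    ring
  constructor
  · rw [hfun]
    exact hs1.sub hs2
  · rw [hfun]
    exact Summable.tsum_pos (hs1.sub hs2) (fun k => (hpos k).le) 0 (hpos 0)
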